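/- arXiv:2412.00466 — 4 statements merged into one kernel-verified Lean document; each statement's English description precedes it below -/
import Mathlib

section
/- In the Bernoulli-design group testing model with n items, defective set K of size k (1 ≤ k < n), m tests, and i.i.d. Bernoulli(p) test-matrix entries with p ∈ (0,1), let G be the number of hidden non-defective items. Then for every integer g with 0 ≤ g ≤ n−k−1, P(G > g) ≤ C(n−k, g+1) · (1 − (1−p)^k + (1−p)^{g+1+k})^m, where C(·,·) denotes the binomial coefficient. -/
open MeasureTheory
open scoped ENNReal

/-- The Bernoulli(p) measure on `Bool`: `P(true) = p`, `P(false) = 1 - p`. -/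
noncomputable def bern (p : ℝ) : Measure Bool :=
  ENNReal.ofReal p • Measure.dirac true + ENNReal.ofReal (1 - p) • Measure.dirac false

instance (p : ℝ) : IsFiniteMeasure (bern p) := by
  constructor
  simp [bern, Measure.add_apply, Measure.smul_apply]

lemma bern_false {p : ℝ} : bern p {false} = ENNReal.ofReal (1 - p) := by
  simp [bern, Measure.dirac_apply]

lemma bern_univ {p : ℝ} (hp : p ∈ Set.Ioo (0:ℝ) 1) : bern p Set.univ = 1 := by
  simp [bern, Measure.dirac_apply]
  rw [← ENNReal.ofReal_add hp.1.le (by linarith [hp.2] : (0:ℝ) ≤ 1 - p)]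
  simp

lemma bern_prob {p : ℝ} (hp : p ∈ Set.Ioo (0:ℝ) 1) : IsProbabilityMeasure (bern p) :=
  ⟨bern_univ hp⟩

lemma cyl {n : ℕ} {p : ℝ} (hp : p ∈ Set.Ioo (0:ℝ) 1) (T : Finset (Fin n)) :
    (Measure.pi fun _ : Fin n => bern p) {row | ∀ j ∈ T, row j = false}
      = ENNReal.ofReal (1 - p) ^ T.card := by
  have hset : {row : Fin n → Bool | ∀ j ∈ T, row j = false}
      = Set.pi Set.univ (fun j => if j ∈ T then {false} else Set.univ) := by
    ext row
    simp only [Set.mem_setOf_eq, Set.mem_pi, Set.mem_univ, forall_true_left]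
    constructor
    · intro h j; split <;> simp_all
    · intro h j hj; have := h j; simp [hj] at this; exact this
  rw [hset, Measure.pi_pi]
  have : ∀ j : Fin n, bern p (if j ∈ T then ({false} : Set Bool) else Set.univ)
      = if j ∈ T then ENNReal.ofReal (1 - p) else 1 := by
    intro j
    by_cases hj : j ∈ T
    · simp [hj, bern_false]
    · simp only [if_neg hj]; exact bern_univ hp
  simp only [this]
  rw [Finset.prod_ite_mem, Finset.univ_inter, Finset.prod_const]

lemma row_bound {n : ℕ} {p : ℝ} (hp : p ∈ Set.Ioo (0:ℝ) 1) (K S : Finset (Fin n))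
    (hdisj : Disjoint K S) :
    (Measure.pi fun _ : Fin n => bern p)
      {row | ∀ j ∈ S, row j = true → ∃ j' ∈ K, row j' = true}
      ≤ ENNReal.ofReal (1 - (1 - p) ^ K.card + (1 - p) ^ (S.card + K.card)) := by
  haveI := bern_prob hp
  have h1p : (0:ℝ) ≤ 1 - p := by linarith [hp.2]
  have h1p' : 1 - p ≤ 1 := by linarith [hp.1]
  set μ := (Measure.pi fun _ : Fin n => bern p)
  set C : Set (Fin n → Bool) := {row | ∀ j ∈ K, row j = false} with hC
  set Z : Set (Fin n → Bool) := {row | ∀ j ∈ S, row j = false} with hZ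
  have hsub : {row : Fin n → Bool | ∀ j ∈ S, row j = true → ∃ j' ∈ K, row j' = true}
      ⊆ Cᶜ ∪ (Z ∩ C) := by
    intro row hrow
    by_cases hc : row ∈ C
    · right
      refine ⟨fun j hj => ?_, hc⟩
      by_contra hne
      have htrue : row j = true := by
        cases h : row j
        · exact absurd h hne
        · rfl
      obtain ⟨j', hj', hj't⟩ := hrow j hj htrue
      have := hc j' hj'
      simp [this] at hj't
    · left; exact hc
  calc μ _ ≤ μ (Cᶜ ∪ (Z ∩ C)) := measure_mono hsub
    _ ≤ μ Cᶜ + μ (Z ∩ C) := measure_union_le _ _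
    _ ≤ _ := by
        have hCm : MeasurableSet C := (Set.to_countable C).measurableSet
        have hCc : μ Cᶜ = 1 - ENNReal.ofReal ((1 - p) ^ K.card) := by
          rw [measure_compl hCm (measure_ne_top _ _), measure_univ]
          rw [hC]
          rw [show ({row : Fin n → Bool | ∀ j ∈ K, row j = false}) =
            {row : Fin n → Bool | ∀ j ∈ K, row j = false} from rfl, cyl hp K,
            ENNReal.ofReal_pow h1p]
        have hZC : μ (Z ∩ C) = ENNReal.ofReal ((1 - p) ^ (S.card + K.card)) := by
          have : Z ∩ C = {row : Fin n → Bool | ∀ j ∈ S ∪ K, row j = false} := by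
            ext row; simp only [hZ, hC, Set.mem_inter_iff, Set.mem_setOf_eq,
              Finset.mem_union]
            constructor
            · rintro ⟨h1, h2⟩ j (hj | hj); exacts [h1 j hj, h2 j hj]
            · intro h; exact ⟨fun j hj => h j (Or.inl hj), fun j hj => h j (Or.inr hj)⟩
          rw [this, cyl hp, Finset.card_union_of_disjoint hdisj.symm,
            ENNReal.ofReal_pow h1p]
        rw [hCc, hZC]
        have hle1 : (1 - p) ^ K.card ≤ 1 := pow_le_one₀ h1p h1p'
        rw [ENNReal.ofReal_add (by linarith) (pow_nonneg h1p _),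
          ENNReal.ofReal_sub _ (pow_nonneg h1p _), ENNReal.ofReal_one]

lemma event_bound {n m : ℕ} {p : ℝ} (hp : p ∈ Set.Ioo (0:ℝ) 1) (K S : Finset (Fin n))
    (hdisj : Disjoint K S) :
    (Measure.pi fun _ : Fin m => Measure.pi fun _ : Fin n => bern p)
      {A | ∀ j ∈ S, ∀ i, A i j = true → ∃ j' ∈ K, A i j' = true}
      ≤ ENNReal.ofReal ((1 - (1 - p) ^ K.card + (1 - p) ^ (S.card + K.card)) ^ m) := by
  haveI := bern_prob hp
  have h1p : (0:ℝ) ≤ 1 - p := by linarith [hp.2]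
  have h1p' : 1 - p ≤ 1 := by linarith [hp.1]
  have hr : (0:ℝ) ≤ 1 - (1 - p) ^ K.card + (1 - p) ^ (S.card + K.card) := by
    have := pow_le_one₀ h1p h1p' (n := K.card)
    have := pow_nonneg h1p (S.card + K.card)
    linarith
  set B : Set (Fin n → Bool) := {row | ∀ j ∈ S, row j = true → ∃ j' ∈ K, row j' = true}
  have hset : {A : Fin m → Fin n → Bool | ∀ j ∈ S, ∀ i, A i j = true → ∃ j' ∈ K, A i j' = true}
      = Set.pi Set.univ (fun _ : Fin m => B) := by
    ext A
    simp only [Set.mem_setOf_eq, Set.mem_pi, Set.mem_univ, forall_true_left, B]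
    tauto
  rw [hset, Measure.pi_pi, Finset.prod_const, Finset.card_univ, Fintype.card_fin,
    ENNReal.ofReal_pow hr]
  exact pow_le_pow_left' (row_bound hp K S hdisj) m

/-- The number of hidden non-defective items: items `j ∉ K` such that every test in which
`j` participates contains some defective item. -/
def hiddenCount {n m : ℕ} (K : Finset (Fin n)) (A : Fin m → Fin n → Bool) : ℕ :=
  ((Finset.univ \ K).filter
    (fun j => ∀ i, A i j = true → ∃ j' ∈ K, A i j' = true)).card

/-- Union bound on the number of hidden non-defectives: for `0 ≤ g ≤ n-k-1`,
`P(G > g) ≤ C(n-k, g+1) (1 - (1-p)^k + (1-p)^(g+1+k))^m`. -/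
theorem stmt3 (n m k g : ℕ) (p : ℝ) (hp : p ∈ Set.Ioo (0 : ℝ) 1)
    (K : Finset (Fin n)) (hK : K.card = k) (hk1 : 1 ≤ k) (hkn : k < n)
    (hg : g ≤ n - k - 1) :
    (Measure.pi fun _ : Fin m => Measure.pi fun _ : Fin n => bern p)
      {A | g < hiddenCount K A}
      ≤ ENNReal.ofReal ((Nat.choose (n - k) (g + 1) : ℝ) *
          (1 - (1 - p) ^ k + (1 - p) ^ (g + 1 + k)) ^ m) := by
  haveI := bern_prob hp
  have h1p : (0:ℝ) ≤ 1 - p := by linarith [hp.2]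
  have h1p' : 1 - p ≤ 1 := by linarith [hp.1]
  have hrm : (0:ℝ) ≤ (1 - (1 - p) ^ k + (1 - p) ^ (g + 1 + k)) ^ m := by
    have h1 := pow_le_one₀ h1p h1p' (n := k)
    have h2 := pow_nonneg h1p (g + 1 + k)
    exact pow_nonneg (by linarith) m
  set μ := (Measure.pi fun _ : Fin m => Measure.pi fun _ : Fin n => bern p) with hμ
  set 𝒮 := Finset.powersetCard (g + 1) (Finset.univ \ K) with h𝒮
  set E : Finset (Fin n) → Set (Fin m → Fin n → Bool) :=
    fun S => {A | ∀ j ∈ S, ∀ i, A i j = true → ∃ j' ∈ K, A i j' = true} with hE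
  have hsub : {A : Fin m → Fin n → Bool | g < hiddenCount K A} ⊆ ⋃ S ∈ 𝒮, E S := by
    intro A hA
    set F := (Finset.univ \ K).filter
      (fun j => ∀ i, A i j = true → ∃ j' ∈ K, A i j' = true) with hF
    have hcard : g + 1 ≤ F.card := hA
    obtain ⟨S, hSF, hScard⟩ := Finset.exists_subset_card_eq hcard
    have hS𝒮 : S ∈ 𝒮 := by
      rw [h𝒮, Finset.mem_powersetCard]
      exact ⟨hSF.trans (Finset.filter_subset _ _), hScard⟩
    refine Set.mem_biUnion hS𝒮 ?_
    intro j hj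
    have := hSF hj
    rw [hF, Finset.mem_filter] at this
    exact this.2
  calc μ {A | g < hiddenCount K A} ≤ μ (⋃ S ∈ 𝒮, E S) := measure_mono hsub
    _ ≤ ∑ S ∈ 𝒮, μ (E S) := measure_biUnion_finset_le _ _
    _ ≤ ∑ _S ∈ 𝒮, ENNReal.ofReal ((1 - (1 - p) ^ k + (1 - p) ^ (g + 1 + k)) ^ m) := by
        refine Finset.sum_le_sum fun S hS => ?_
        rw [h𝒮, Finset.mem_powersetCard] at hS
        have hdisj : Disjoint K S := by
          rw [Finset.disjoint_right]
          intro a ha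
          exact (Finset.mem_sdiff.mp (hS.1 ha)).2
        have := event_bound (m := m) hp K S hdisj
        rwa [hK, hS.2] at this
    _ = 𝒮.card • ENNReal.ofReal ((1 - (1 - p) ^ k + (1 - p) ^ (g + 1 + k)) ^ m) :=
        Finset.sum_const _
    _ ≤ _ := by
        have hcard : 𝒮.card = Nat.choose (n - k) (g + 1) := by
          rw [h𝒮, Finset.card_powersetCard, Finset.card_sdiff_of_subset (Finset.subset_univ K),
            Finset.card_univ, Fintype.card_fin, hK]
        rw [hcard, nsmul_eq_mul, ENNReal.ofReal_mul (by positivity), ENNReal.ofReal_natCast]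
end

section
/- For every integer k ≥ 2, with p = 1/k one has log( 1 / (1 − (1 − 1/k)^k + (1 − 1/k)^{k+1}) ) ≥ 1/(e(k+1)), where log is the natural logarithm and e is Euler's number. -/
open MeasureTheory
open scoped ENNReal

-- key lemma: k ≤ e (k+1) (1-1/k)^k
lemma key_ineq (k : ℕ) (hk : 2 ≤ k) :
    (k : ℝ) ≤ Real.exp 1 * ((k : ℝ) + 1) * (1 - 1 / (k : ℝ)) ^ k := by
  have hK : (2:ℝ) ≤ (k:ℝ) := by exact_mod_cast hk
  have hK0 : (0:ℝ) < k := by linarith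
  have hx1 : 1 / (k:ℝ) ≤ 1/2 := by
    rw [div_le_div_iff₀ hK0 (by norm_num)]; linarith
  have hx0 : 0 < 1 / (k:ℝ) := by positivity
  have hq0 : (0:ℝ) < 1 - 1/(k:ℝ) := by linarith
  rcases Nat.lt_or_ge k 4 with h4 | h4
  · interval_cases k
    · have := Real.exp_one_gt_d9
      norm_num
      nlinarith
    · have := Real.exp_one_gt_d9
      norm_num
      nlinarith
  · -- k ≥ 4
    have hK4 : (4:ℝ) ≤ (k:ℝ) := by exact_mod_cast h4
    obtain ⟨y, hy⟩ : ∃ y : ℝ, y = 1/(k:ℝ) := ⟨_, rfl⟩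
    have hky : (k:ℝ) * y = 1 := by rw [hy]; field_simp
    have hy0 : 0 < y := hy ▸ hx0
    have hy14 : y ≤ 1/4 := by
      rw [hy, div_le_div_iff₀ hK0 (by norm_num)]; linarith
    have habs : |y| < 1 := by rw [abs_of_pos hy0]; linarith
    have h := Real.abs_log_sub_add_sum_range_le habs 3
    rw [abs_of_pos hy0] at h
    have hsum : (∑ i ∈ Finset.range 3, y ^ (i + 1) / (i + 1)) = y + y^2/2 + y^3/3 := by
      simp [Finset.sum_range_succ]; ring
    rw [hsum] at h
    have herr : y ^ (3+1) / (1 - y) ≤ 2 * y^4 := by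
      have h1 : y ^ (3+1) = y^4 := by norm_num
      rw [h1, div_le_iff₀ (by linarith : (0:ℝ) < 1 - y)]
      nlinarith [mul_nonneg (pow_nonneg hy0.le 4) (by linarith : (0:ℝ) ≤ 1 - 2*y)]
    have hlog : -(y + y^2/2 + y^3/3 + 2*y^4) ≤ Real.log (1 - y) := by
      have h2 := (abs_le.1 h).1
      linarith
    have hkq : (k:ℝ) * (y + y^2/2 + y^3/3 + 2*y^4) = 1 + (y/2 + y^2/3 + 2*y^3) + 2*y^3 * 0 := by
      linear_combination (1 + y/2 + y^2/3 + 2*y^3) * hky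
    have hs : -1 - (y/2 + y^2/3 + 2*y^3) ≤ (k:ℝ) * Real.log (1 - y) := by
      have h1 := mul_le_mul_of_nonneg_left hlog hK0.le
      nlinarith [h1, hkq]
    have hqk2 : Real.exp (-1 - (y/2 + y^2/3 + 2*y^3)) ≤ (1 - y)^k := by
      have hqk : (1 - y)^k = Real.exp ((k:ℝ) * Real.log (1-y)) := by
        rw [← Real.log_pow, Real.exp_log (pow_pos (by linarith) k)]
      rw [hqk]
      exact Real.exp_le_exp.2 hs
    have hks : (k:ℝ) * (y/2 + y^2/3 + 2*y^3) = 1/2 + y/3 + 2*y^2 := by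
      linear_combination (1/2 + y/3 + 2*y^2) * hky
    have hfin : (k:ℝ) ≤ ((k:ℝ)+1) * (1 - (y/2 + y^2/3 + 2*y^3)) := by
      nlinarith [hks, hy0, hy14, sq_nonneg y, mul_nonneg hy0.le (by linarith : (0:ℝ) ≤ 1/4 - y), mul_nonneg (mul_nonneg hy0.le hy0.le) (by linarith : (0:ℝ) ≤ 1/4 - y)]
    have h1s : 1 - (y/2 + y^2/3 + 2*y^3) ≤ Real.exp (-(y/2 + y^2/3 + 2*y^3)) := by
      have := Real.add_one_le_exp (-(y/2 + y^2/3 + 2*y^3))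
      linarith
    calc (k:ℝ) ≤ ((k:ℝ)+1) * (1 - (y/2 + y^2/3 + 2*y^3)) := hfin
      _ ≤ ((k:ℝ)+1) * Real.exp (-(y/2 + y^2/3 + 2*y^3)) :=
          mul_le_mul_of_nonneg_left h1s (by linarith)
      _ = Real.exp 1 * ((k:ℝ)+1) * Real.exp (-1 - (y/2 + y^2/3 + 2*y^3)) := by
          rw [mul_comm (Real.exp 1), mul_assoc, ← Real.exp_add]
          ring_nf
      _ ≤ Real.exp 1 * ((k:ℝ)+1) * (1-y)^k :=
          mul_le_mul_of_nonneg_left hqk2 (by positivity)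
      _ = Real.exp 1 * ((k:ℝ)+1) * (1 - 1/(k:ℝ))^k := by rw [hy]

/-- For `k ≥ 2` and `p = 1/k`,
`log(1/(1 - (1-1/k)^k + (1-1/k)^(k+1))) ≥ 1/(e(k+1))`. -/
theorem stmt6 (k : ℕ) (hk : 2 ≤ k) :
    Real.log (1 / (1 - (1 - 1 / (k : ℝ)) ^ k + (1 - 1 / (k : ℝ)) ^ (k + 1)))
      ≥ 1 / (Real.exp 1 * ((k : ℝ) + 1)) := by
  have hK : (2:ℝ) ≤ (k:ℝ) := by exact_mod_cast hk
  have hK0 : (0:ℝ) < k := by linarith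
  have hq0 : (0:ℝ) < 1 - 1/(k:ℝ) := by
    have : 1/(k:ℝ) ≤ 1/2 := by rw [div_le_div_iff₀ hK0 (by norm_num)]; linarith
    linarith
  have hq1 : 1 - 1/(k:ℝ) < 1 := by
    have : 0 < 1/(k:ℝ) := by positivity
    linarith
  have hqk0 : 0 < (1 - 1/(k:ℝ)) ^ k := pow_pos hq0 k
  have hqk1 : (1 - 1/(k:ℝ)) ^ k ≤ 1 := pow_le_one₀ (le_of_lt hq0) (le_of_lt hq1)
  obtain ⟨X, hXdef⟩ : ∃ X : ℝ, X = (1 - 1/(k:ℝ)) ^ k * (1/(k:ℝ)) := ⟨_, rfl⟩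
  have hDX : 1 - (1 - 1/(k:ℝ)) ^ k + (1 - 1/(k:ℝ)) ^ (k+1) = 1 - X := by
    rw [hXdef, pow_succ]; ring
  have hX0 : 0 < X := by rw [hXdef]; positivity
  have hX1 : X < 1 := by
    have h1k : 1/(k:ℝ) ≤ 1/2 := by rw [div_le_div_iff₀ hK0 (by norm_num)]; linarith
    have h1k0 : 0 < 1/(k:ℝ) := by positivity
    rw [hXdef]
    nlinarith
  have hD0 : 0 < 1 - X := by linarith
  rw [hDX]
  have hlog : Real.log (1 / (1 - X)) ≥ X := by
    rw [one_div, Real.log_inv]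
    have := Real.log_le_sub_one_of_pos hD0
    linarith
  have hE : (0:ℝ) < Real.exp 1 * ((k:ℝ)+1) := by positivity
  have hXge : 1 / (Real.exp 1 * ((k:ℝ)+1)) ≤ X := by
    rw [div_le_iff₀ hE]
    have hkey := key_ineq k hk
    have h1 : (k:ℝ)*(1/(k:ℝ)) = 1 := by field_simp
    have h2 := mul_le_mul_of_nonneg_right hkey (by positivity : (0:ℝ) ≤ 1/(k:ℝ))
    rw [hXdef]
    nlinarith [h1, h2]
  linarith
end

section
/- (Subset coupon collector tail bound, Lemma 3(b).) Let w ≥ 2 and 0 ≤ g ≤ w−2 be integers, and let T be the stopping time of the subset coupon collector problem: the first time the i.i.d. uniform draws from w coupons have produced w − g distinct coupons. Then for every real χ > 1, letting R = ⌈χ w (log w + γ − H_g)⌉ where γ is the Euler–Mascheroni constant and H_g the g-th harmonic number, one has P(T > R) ≤ w^{(g+1)(1−χ)} · e^{(g+1)χ(H_g − γ) + g} / (g+1)^{g+1}. -/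
open MeasureTheory
open scoped ENNReal

/-- The `j`-th harmonic number `H_j = ∑_{i=1}^j 1/i`, with `H_0 = 0`. -/
noncomputable def harm (j : ℕ) : ℝ := ∑ i ∈ Finset.range j, 1 / ((i : ℝ) + 1)

lemma harm_eq (g : ℕ) : harm g = ((harmonic g : ℚ) : ℝ) := by
  unfold harm harmonic
  push_cast
  simp [one_div]

lemma harm_lt (g : ℕ) : harm g < Real.log (g + 1) + Real.eulerMascheroniConstant := by
  have := Real.eulerMascheroniSeq_lt_eulerMascheroniConstant g
  unfold Real.eulerMascheroniSeq at this
  rw [harm_eq]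
  linarith

lemma pow_le_exp_factorial : ∀ n : ℕ, ((n : ℝ) + 1) ^ (n + 1) ≤ Real.exp n * (Nat.factorial (n+1) : ℝ) := by
  intro n
  induction n with
  | zero => simp
  | succ m ih =>
    have hm : (0:ℝ) < (m:ℝ) + 1 := by positivity
    have h1 : ((m:ℝ) + 2) ^ (m + 1) ≤ Real.exp 1 * ((m:ℝ) + 1) ^ (m + 1) := by
      have hb : (m:ℝ) + 2 ≤ Real.exp (1 / ((m:ℝ)+1)) * ((m:ℝ) + 1) := by
        have := Real.add_one_le_exp (1 / ((m:ℝ)+1))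
        calc (m:ℝ) + 2 = (1 / ((m:ℝ)+1) + 1) * ((m:ℝ)+1) := by field_simp; ring
          _ ≤ Real.exp (1 / ((m:ℝ)+1)) * ((m:ℝ)+1) := by
              apply mul_le_mul_of_nonneg_right this (le_of_lt hm)
      calc ((m:ℝ) + 2) ^ (m + 1) ≤ (Real.exp (1 / ((m:ℝ)+1)) * ((m:ℝ) + 1)) ^ (m + 1) := by
            apply pow_le_pow_left₀ (by positivity) hb
        _ = Real.exp (1 / ((m:ℝ)+1)) ^ (m+1) * ((m:ℝ) + 1) ^ (m + 1) := mul_pow _ _ _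
        _ = Real.exp 1 * ((m:ℝ) + 1) ^ (m + 1) := by
            rw [← Real.exp_nat_mul]
            congr 1
            push_cast; field_simp
    have h2 : ((m:ℝ) + 1 + 1) ^ (m + 1 + 1) = ((m:ℝ)+2) * ((m:ℝ) + 2) ^ (m + 1) := by
      ring
    push_cast
    rw [h2]
    calc ((m:ℝ)+2) * ((m:ℝ) + 2) ^ (m + 1)
        ≤ ((m:ℝ)+2) * (Real.exp 1 * ((m:ℝ) + 1) ^ (m + 1)) := by
          apply mul_le_mul_of_nonneg_left h1 (by positivity)
      _ ≤ ((m:ℝ)+2) * (Real.exp 1 * (Real.exp m * (Nat.factorial (m+1) : ℝ))) := by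
          apply mul_le_mul_of_nonneg_left _ (by positivity)
          exact mul_le_mul_of_nonneg_left ih (le_of_lt (Real.exp_pos 1))
      _ = Real.exp ((m:ℝ) + 1) * ((m:ℝ)+2) * (Nat.factorial (m+1) : ℝ) := by
          rw [Real.exp_add]
          ring
      _ = Real.exp ((m:ℝ)+1) * (Nat.factorial (m+1+1) : ℝ) := by
          rw [Nat.factorial_succ (m+1)]
          push_cast
          ring

lemma meas_preimage_finset {Ω : Type*} [MeasurableSpace Ω] (μ : Measure Ω)
    (w : ℕ) (Y : Ω → Fin w) (hY : Measurable Y)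
    (hunif : ∀ x, μ (Y ⁻¹' {x}) = ((w : ℝ≥0∞))⁻¹) (A : Finset (Fin w)) :
    μ (Y ⁻¹' ↑A) = (A.card : ℝ≥0∞) * (w : ℝ≥0∞)⁻¹ := by
  have h : (↑A : Set (Fin w)) = ⋃ x ∈ A, {x} := by ext y; simp
  rw [h, Set.preimage_iUnion₂, measure_biUnion_finset]
  · simp [hunif, Finset.sum_const, nsmul_eq_mul]
  · intro x _ y _ hxy
    apply Set.disjoint_left.mpr
    intro ω h1 h2
    simp only [Set.mem_preimage, Set.mem_singleton_iff] at h1 h2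
    exact hxy (h1 ▸ h2 ▸ rfl)
  · intro x _
    exact hY (measurableSet_singleton x)

/-- The stopping time of the subset coupon collector problem: the first time `t` at which the
draws `X 0 ω, …, X (t-1) ω` contain at least `w - g` distinct coupons. -/
noncomputable def stopT {Ω : Type*} (w g : ℕ) (X : ℕ → Ω → Fin w) (ω : Ω) : ℕ :=
  sInf {t | w - g ≤ ((Finset.range t).image fun i => X i ω).card}

/-- Subset coupon collector tail bound (Lemma 3(b)): for `χ > 1` and
`R = ⌈χ w (log w + γ - H_g)⌉`,
`P(T > R) ≤ w^{(g+1)(1-χ)} e^{(g+1)χ(H_g - γ) + g} / (g+1)^{g+1}`. -/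
theorem stmt10 {Ω : Type*} [MeasurableSpace Ω] (μ : Measure Ω) [IsProbabilityMeasure μ]
    (w g : ℕ) (hw : 2 ≤ w) (hg : g ≤ w - 2)
    (X : ℕ → Ω → Fin w) (hX : ∀ i, Measurable (X i))
    (hindep : ProbabilityTheory.iIndepFun X μ)
    (hunif : ∀ i x, μ (X i ⁻¹' {x}) = ((w : ℝ≥0∞))⁻¹)
    (χ : ℝ) (hχ : 1 < χ) (R : ℕ)
    (hR : R = ⌈χ * (w : ℝ) * (Real.log w + Real.eulerMascheroniConstant - harm g)⌉₊) :
    μ {ω | R < stopT w g X ω}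
      ≤ ENNReal.ofReal ((w : ℝ) ^ (((g : ℝ) + 1) * (1 - χ)) *
          Real.exp (((g : ℝ) + 1) * χ * (harm g - Real.eulerMascheroniConstant) + (g : ℝ)) /
          ((g : ℝ) + 1) ^ (g + 1)) := by
  classical
  have hgw : g + 2 ≤ w := by omega
  set k := g + 1 with hk
  have hkw : k ≤ w := by omega
  set F : Finset (Finset (Fin w)) := Finset.powersetCard k Finset.univ with hF
  set A : Finset (Fin w) → Set Ω :=
    fun S => ⋂ i ∈ Finset.range R, X i ⁻¹' (↑(Sᶜ) : Set (Fin w)) with hA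
  -- Step 1: inclusion
  have hsub : {ω | R < stopT w g X ω} ⊆ ⋃ S ∈ F, A S := by
    intro ω hω
    have hω' : R < stopT w g X ω := hω
    have hnot : ¬ (w - g ≤ ((Finset.range R).image fun i => X i ω).card) := by
      intro h
      have : stopT w g X ω ≤ R := Nat.sInf_le h
      omega
    set I := (Finset.range R).image fun i => X i ω with hI
    have hcard : k ≤ (Finset.univ \ I).card := by
      have h1 : I.card ≤ w := le_trans (Finset.card_le_univ I) (by simp)
      have h2 : (Finset.univ \ I).card = w - I.card := by
        rw [Finset.card_sdiff_of_subset (Finset.subset_univ I)]; simp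
      omega
    obtain ⟨S, hS, hcardS⟩ := Finset.exists_subset_card_eq hcard
    refine Set.mem_biUnion (Finset.mem_powersetCard.mpr ⟨Finset.subset_univ S, hcardS⟩) ?_
    refine Set.mem_iInter₂.mpr fun i hi => ?_
    simp only [Set.mem_preimage, Finset.coe_compl, Set.mem_compl_iff, Finset.mem_coe]
    intro hmem
    have hXI : X i ω ∈ I := Finset.mem_image.mpr ⟨i, hi, rfl⟩
    have := hS hmem
    rw [Finset.mem_sdiff] at this
    exact this.2 hXI
  -- Step 2: measure of each event
  set c : ℝ≥0∞ := ((w - k : ℕ) : ℝ≥0∞) * (w : ℝ≥0∞)⁻¹ with hc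
  have hmeas : ∀ S ∈ F, μ (A S) = c ^ R := by
    intro S hSF
    have hcardS : S.card = k := (Finset.mem_powersetCard.mp hSF).2
    rw [hA]
    have hmeasb : ∀ i ∈ Finset.range R,
        MeasurableSet[MeasurableSpace.comap (X i) inferInstance]
          (X i ⁻¹' (↑(Sᶜ) : Set (Fin w))) :=
      fun i _ => ⟨(↑(Sᶜ) : Set (Fin w)), trivial, rfl⟩
    rw [hindep.meas_biInter hmeasb]
    have hterm : ∀ i, μ (X i ⁻¹' (↑(Sᶜ) : Set (Fin w))) = c := by
      intro i
      rw [meas_preimage_finset μ w (X i) (hX i) (hunif i), hc]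
      congr 2
      rw [Finset.card_compl, hcardS, Fintype.card_fin]
    rw [Finset.prod_congr rfl (fun i _ => hterm i), Finset.prod_const, Finset.card_range]
  -- Step 3: union bound
  have hbound : μ {ω | R < stopT w g X ω} ≤ (w.choose k : ℝ≥0∞) * c ^ R := by
    calc μ {ω | R < stopT w g X ω} ≤ μ (⋃ S ∈ F, A S) := measure_mono hsub
      _ ≤ ∑ S ∈ F, μ (A S) := measure_biUnion_finset_le F A
      _ = ∑ _S ∈ F, c ^ R := Finset.sum_congr rfl hmeas
      _ = (F.card : ℝ≥0∞) * c ^ R := by rw [Finset.sum_const, nsmul_eq_mul]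
      _ = (w.choose k : ℝ≥0∞) * c ^ R := by
          rw [hF, Finset.card_powersetCard, Finset.card_univ, Fintype.card_fin]
  -- Step 4: rewrite bound as ofReal
  have hw0 : (0:ℝ) < w := by positivity
  have hkR : (k : ℝ) ≤ w := by exact_mod_cast hkw
  set qn : ℝ := ((w : ℝ) - k) / w with hqn
  have hqn0 : 0 ≤ qn := by
    rw [hqn]; exact div_nonneg (by linarith) (le_of_lt hw0)
  have hcq : c = ENNReal.ofReal qn := by
    rw [hc, hqn, ENNReal.ofReal_div_of_pos hw0]
    have h1 : ((w - k : ℕ) : ℝ≥0∞) = ENNReal.ofReal ((w:ℝ) - k) := by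
      rw [← Nat.cast_sub hkw, ← ENNReal.ofReal_natCast (w - k)]
    rw [h1, ENNReal.ofReal_natCast, div_eq_mul_inv]
  have hofreal : (w.choose k : ℝ≥0∞) * c ^ R
      = ENNReal.ofReal ((w.choose k : ℝ) * qn ^ R) := by
    rw [hcq, ← ENNReal.ofReal_pow hqn0, ← ENNReal.ofReal_natCast,
      ← ENNReal.ofReal_mul (by positivity)]
  -- Step 5: real inequality
  have hreal : (w.choose k : ℝ) * qn ^ R
      ≤ (w : ℝ) ^ (((g : ℝ) + 1) * (1 - χ)) *
          Real.exp (((g : ℝ) + 1) * χ * (harm g - Real.eulerMascheroniConstant) + (g : ℝ)) /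
          ((g : ℝ) + 1) ^ (g + 1) := by
    have hg1w : (g:ℝ) + 1 ≤ w := by exact_mod_cast (by omega : g + 1 ≤ w)
    have hkcast : ((k:ℕ):ℝ) = (g:ℝ) + 1 := by rw [hk]; push_cast; ring
    set L : ℝ := Real.log w + Real.eulerMascheroniConstant - harm g with hL
    have hLpos : 0 < L := by
      have h1 := harm_lt g
      have h2 : Real.log ((g:ℝ)+1) ≤ Real.log w := Real.log_le_log (by positivity) hg1w
      rw [hL]; push_cast at h1 ⊢; linarith
    have hRge : χ * w * L ≤ R := by rw [hR]; exact Nat.le_ceil _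
    have hq_exp : qn ≤ Real.exp (-(↑k / ↑w)) := by
      have h3 := Real.add_one_le_exp (-((k:ℝ) / ↑w))
      have h4 : qn = 1 - (k:ℝ)/w := by rw [hqn]; field_simp
      rw [h4]; linarith
    have hpow : qn ^ R ≤ Real.exp (-(↑k / ↑w) * R) := by
      calc qn ^ R ≤ Real.exp (-((k:ℝ) / ↑w)) ^ R := pow_le_pow_left₀ hqn0 hq_exp R
        _ = Real.exp (-((k:ℝ) / ↑w) * R) := by rw [← Real.exp_nat_mul]; ring_nf
    have hexp2 : Real.exp (-((k:ℝ) / ↑w) * R) ≤ Real.exp (-((k:ℝ) * χ * L)) := by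
      apply Real.exp_le_exp.mpr
      have heq : -((k:ℝ) / ↑w) * (χ * ↑w * L) = -((k:ℝ) * χ * L) := by
        field_simp
      calc -((k:ℝ) / ↑w) * ↑R ≤ -((k:ℝ) / ↑w) * (χ * ↑w * L) := by
            apply mul_le_mul_of_nonpos_left hRge
            have : (0:ℝ) ≤ (k:ℝ) / ↑w := by positivity
            linarith
        _ = -((k:ℝ) * χ * L) := heq
    have hsplit : Real.exp (-((k:ℝ) * χ * L))
        = (w:ℝ) ^ (-((k:ℝ) * χ)) * Real.exp ((k:ℝ) * χ * (harm g - Real.eulerMascheroniConstant)) := by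
      rw [Real.rpow_def_of_pos hw0, ← Real.exp_add]
      congr 1
      rw [hL]; ring
    have hq_final : qn ^ R ≤ (w:ℝ) ^ (-((k:ℝ) * χ))
        * Real.exp ((k:ℝ) * χ * (harm g - Real.eulerMascheroniConstant)) := by
      rw [← hsplit]; exact le_trans hpow hexp2
    have hchoose : (w.choose k : ℝ) * (k.factorial : ℝ) ≤ (w:ℝ) ^ (k:ℕ) := by
      have h5 := Nat.descFactorial_le_pow w k
      rw [Nat.descFactorial_eq_factorial_mul_choose] at h5
      exact_mod_cast by push_cast at h5 ⊢; linarith [h5]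
    have hfact : ((g:ℝ)+1) ^ (g+1) ≤ Real.exp g * (k.factorial : ℝ) := by
      have := pow_le_exp_factorial g
      rw [hk]; exact this
    have hGpos : (0:ℝ) < ((g:ℝ)+1) ^ (g+1) := by positivity
    have h5 : (w.choose k : ℝ) * ((g:ℝ)+1) ^ (g+1) ≤ (w:ℝ) ^ (k:ℕ) * Real.exp g := by
      calc (w.choose k : ℝ) * ((g:ℝ)+1) ^ (g+1)
          ≤ (w.choose k : ℝ) * (Real.exp g * (k.factorial : ℝ)) := by
            apply mul_le_mul_of_nonneg_left hfact (by positivity)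
        _ = ((w.choose k : ℝ) * (k.factorial : ℝ)) * Real.exp g := by ring
        _ ≤ (w:ℝ) ^ (k:ℕ) * Real.exp g := by
            apply mul_le_mul_of_nonneg_right hchoose (le_of_lt (Real.exp_pos _))
    have h6 : (w.choose k : ℝ) ≤ (w:ℝ) ^ (k:ℕ) * Real.exp g / ((g:ℝ)+1) ^ (g+1) := by
      rw [le_div_iff₀ hGpos]; exact h5
    calc (w.choose k : ℝ) * qn ^ R
        ≤ ((w:ℝ) ^ (k:ℕ) * Real.exp g / ((g:ℝ)+1) ^ (g+1)) * ((w:ℝ) ^ (-((k:ℝ) * χ))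
            * Real.exp ((k:ℝ) * χ * (harm g - Real.eulerMascheroniConstant))) := by
          apply mul_le_mul h6 hq_final (by positivity) (by positivity)
      _ = (w : ℝ) ^ (((g : ℝ) + 1) * (1 - χ)) *
          Real.exp (((g : ℝ) + 1) * χ * (harm g - Real.eulerMascheroniConstant) + (g : ℝ)) /
          ((g : ℝ) + 1) ^ (g + 1) := by
          rw [Real.exp_add, ← Real.rpow_natCast (w:ℝ) k,
            show ((g:ℝ)+1) * (1-χ) = ((k:ℕ):ℝ) + -(((k:ℕ):ℝ) * χ) by rw [hkcast]; ring,
            Real.rpow_add hw0, hkcast]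
          ring
  calc μ {ω | R < stopT w g X ω} ≤ (w.choose k : ℝ≥0∞) * c ^ R := hbound
    _ = ENNReal.ofReal ((w.choose k : ℝ) * qn ^ R) := hofreal
    _ ≤ _ := ENNReal.ofReal_le_ofReal hreal
end

section
/- In the Bernoulli-design group testing model with n items, defective set K of size k (1 ≤ k < n), m tests, and i.i.d. Bernoulli(p) test-matrix entries with p ∈ (0,1), let G be the number of hidden non-defective items. Then for every integer g with 0 ≤ g ≤ n−k, P(G = g) = C(n−k, g) · Σ_{b=0}^{m} C(m, b) · (1−p)^{b(g+k)} · (1 − (1−p)^b)^{n−k−g} · (1 − (1−p)^k)^{m−b}, where C(·,·) denotes the binomial coefficient and 0^0 := 1. -/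
open MeasureTheory
open scoped ENNReal

open Finset

noncomputable def w (p : ℝ) : Bool → ℝ≥0∞ :=
  fun b => if b then ENNReal.ofReal p else ENNReal.ofReal (1 - p)

lemma w_true (p : ℝ) : w p true = ENNReal.ofReal p := by simp [w]
lemma w_false (p : ℝ) : w p false = ENNReal.ofReal (1 - p) := by simp [w]

lemma w_sum {p : ℝ} (hp0 : 0 ≤ p) (hp1 : p ≤ 1) : ∑ b : Bool, w p b = 1 := by
  rw [Fintype.sum_bool, w_true, w_false, ← ENNReal.ofReal_add hp0 (by linarith)]
  simp

lemma bern_singleton (p : ℝ) (x : Bool) : bern p {x} = w p x := by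
  cases x <;> simp [bern, w, Measure.dirac_apply]

lemma meas_eq_sum {α : Type*} [Fintype α] [MeasurableSpace α] [MeasurableSingletonClass α]
    (μ : Measure α) (S : Set α) [DecidablePred (· ∈ S)] :
    μ S = ∑ x ∈ Finset.univ.filter (· ∈ S), μ {x} := by
  have h : S = ⋃ x ∈ Finset.univ.filter (· ∈ S), ({x} : Set α) := by
    ext y; simp
  conv_lhs => rw [h]
  rw [measure_biUnion_finset]
  · intro a _ b _ hab
    simp [Function.onFun, Set.disjoint_singleton, hab]
  · intro b _; exact measurableSet_singleton _

lemma pi_singleton (p : ℝ) {n m : ℕ} (A : Fin m → Fin n → Bool) :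
    (Measure.pi fun _ : Fin m => Measure.pi fun _ : Fin n => bern p) {A}
      = ∏ i, ∏ j, w p (A i j) := by
  rw [← Set.univ_pi_singleton A, Measure.pi_pi]
  refine Finset.prod_congr rfl fun i _ => ?_
  rw [← Set.univ_pi_singleton (A i), Measure.pi_pi]
  exact Finset.prod_congr rfl fun j _ => bern_singleton p (A i j)

lemma sum_pi_filter {ι β : Type*} [Fintype ι] [DecidableEq ι] [Fintype β] [DecidableEq β]
    (Pr : ι → β → Prop) [∀ i b, Decidable (Pr i b)] (f : β → ℝ≥0∞) :
    ∑ c ∈ Finset.univ.filter (fun c : ι → β => ∀ i, Pr i (c i)), ∏ i, f (c i)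
      = ∏ i, ∑ b ∈ Finset.univ.filter (Pr i), f b := by
  rw [Finset.prod_univ_sum]
  refine Finset.sum_congr ?_ fun _ _ => rfl
  ext c
  simp [Fintype.mem_piFinset]

lemma sum_total {ι : Type*} [Fintype ι] [DecidableEq ι] {p : ℝ} (hp0 : 0 ≤ p) (hp1 : p ≤ 1) :
    ∑ c : ι → Bool, ∏ i, w p (c i) = 1 := by
  calc ∑ c : ι → Bool, ∏ i, w p (c i)
      = ∑ c ∈ Fintype.piFinset (fun _ : ι => (Finset.univ : Finset Bool)), ∏ i, w p (c i) := by
        rw [Fintype.piFinset_univ]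
    _ = ∏ i : ι, ∑ b : Bool, w p b := (Finset.prod_univ_sum _ _).symm
    _ = 1 := by rw [Finset.prod_congr rfl fun i _ => w_sum hp0 hp1, Finset.prod_const_one]

lemma sum_forall_false {ι : Type*} [Fintype ι] [DecidableEq ι] {p : ℝ}
    (hp0 : 0 ≤ p) (hp1 : p ≤ 1) (s : Finset ι) :
    ∑ c ∈ Finset.univ.filter (fun c : ι → Bool => ∀ i ∈ s, c i = false), ∏ i, w p (c i)
      = (ENNReal.ofReal (1 - p)) ^ s.card := by
  have h := sum_pi_filter (ι := ι) (fun i (b : Bool) => i ∈ s → b = false) (w p)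
  rw [h]
  have hcol : ∀ i : ι, (∑ b ∈ Finset.univ.filter (fun b : Bool => i ∈ s → b = false), w p b)
      = if i ∈ s then ENNReal.ofReal (1 - p) else 1 := by
    intro i
    by_cases hi : i ∈ s
    · have : Finset.univ.filter (fun b : Bool => i ∈ s → b = false) = {false} := by
        ext b; simp [hi]
      rw [this]; simp [w, hi]
    · have : Finset.univ.filter (fun b : Bool => i ∈ s → b = false) = Finset.univ := by
        ext b; simp [hi]
      rw [this, w_sum hp0 hp1]; simp [hi]
  rw [Finset.prod_congr rfl fun i _ => hcol i, Finset.prod_ite_mem, Finset.univ_inter,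
    Finset.prod_const]

lemma sum_exists_true {ι : Type*} [Fintype ι] [DecidableEq ι] {p : ℝ}
    (hp0 : 0 ≤ p) (hp1 : p ≤ 1) (s : Finset ι) :
    ∑ c ∈ Finset.univ.filter (fun c : ι → Bool => ∃ i ∈ s, c i = true), ∏ i, w p (c i)
      = 1 - (ENNReal.ofReal (1 - p)) ^ s.card := by
  have hsplit := Finset.sum_filter_add_sum_filter_not Finset.univ
    (fun c : ι → Bool => ∀ i ∈ s, c i = false) (fun c => ∏ i, w p (c i))
  rw [sum_forall_false hp0 hp1 s] at hsplit
  have hnot : Finset.univ.filter (fun c : ι → Bool => ¬ ∀ i ∈ s, c i = false)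
      = Finset.univ.filter (fun c : ι → Bool => ∃ i ∈ s, c i = true) := by
    apply Finset.filter_congr
    intro c _
    push_neg
    simp [Bool.not_eq_false]
  rw [hnot, sum_total hp0 hp1] at hsplit
  have hfin : (ENNReal.ofReal (1 - p)) ^ s.card ≠ ⊤ := by
    exact ENNReal.pow_ne_top ENNReal.ofReal_ne_top
  rw [add_comm] at hsplit
  exact ENNReal.eq_sub_of_add_eq hfin hsplit

lemma fiber_sum {p : ℝ} (hp0 : 0 ≤ p) (hp1 : p ≤ 1) {n m : ℕ}
    (K : Finset (Fin n)) (B : Finset (Fin m)) (H : Finset (Fin n)) :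
    ∑ A ∈ Finset.univ.filter (fun A : Fin m → Fin n → Bool =>
        (∀ i ∈ B, ∀ j ∈ K ∪ H, A i j = false) ∧
        (∀ i ∉ B, ∃ j ∈ K, A i j = true) ∧
        (∀ j ∉ K ∪ H, ∃ i ∈ B, A i j = true)),
      ∏ i, ∏ j, w p (A i j)
    = (ENNReal.ofReal (1 - p)) ^ (B.card * (K ∪ H).card)
      * (1 - (ENNReal.ofReal (1 - p)) ^ B.card) ^ (n - (K ∪ H).card)
      * (1 - (ENNReal.ofReal (1 - p)) ^ K.card) ^ (m - B.card) := by
  classical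
  set Q : ℝ≥0∞ := ENNReal.ofReal (1 - p) with hQ
  set S : Finset (Fin n) := K ∪ H with hS
  -- predicates on the two row-blocks
  set Cu : ({i : Fin m // i ∈ B} → Fin n → Bool) → Prop :=
    fun u => (∀ i : {i : Fin m // i ∈ B}, ∀ j ∈ S, u i j = false) ∧
      (∀ j ∉ S, ∃ i : {i : Fin m // i ∈ B}, u i j = true) with hCu
  set Cv : ({i : Fin m // ¬ i ∈ B} → Fin n → Bool) → Prop :=
    fun v => ∀ i : {i : Fin m // ¬ i ∈ B}, ∃ j ∈ K, v i j = true with hCv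
  set e := Equiv.piEquivPiSubtypeProd (fun i : Fin m => i ∈ B) (fun _ => Fin n → Bool) with he
  have key : ∀ uv : ({i : Fin m // i ∈ B} → Fin n → Bool) × ({i : Fin m // ¬ i ∈ B} → Fin n → Bool),
      (if ((∀ i ∈ B, ∀ j ∈ S, (e.symm uv) i j = false) ∧
        (∀ i ∉ B, ∃ j ∈ K, (e.symm uv) i j = true) ∧
        (∀ j ∉ S, ∃ i ∈ B, (e.symm uv) i j = true)) then ∏ i, ∏ j, w p ((e.symm uv) i j) else 0)
      = (if Cu uv.1 then ∏ i : {i : Fin m // i ∈ B}, ∏ j, w p (uv.1 i j) else 0)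
        * (if Cv uv.2 then ∏ i : {i : Fin m // ¬ i ∈ B}, ∏ j, w p (uv.2 i j) else 0) := by
    rintro ⟨u, v⟩
    have happ : ∀ i : Fin m, (e.symm (u, v)) i = if h : i ∈ B then u ⟨i, h⟩ else v ⟨i, h⟩ :=
      fun i => Equiv.piEquivPiSubtypeProd_symm_apply (fun i : Fin m => i ∈ B) (fun _ => Fin n → Bool) (u, v) i
    have hcond : ((∀ i ∈ B, ∀ j ∈ S, (e.symm (u, v)) i j = false) ∧
        (∀ i ∉ B, ∃ j ∈ K, (e.symm (u, v)) i j = true) ∧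
        (∀ j ∉ S, ∃ i ∈ B, (e.symm (u, v)) i j = true)) ↔ (Cu u ∧ Cv v) := by
      constructor
      · rintro ⟨h1, h2, h3⟩
        refine ⟨⟨fun i j hj => ?_, fun j hj => ?_⟩, fun i => ?_⟩
        · have := h1 i.1 i.2 j hj; rwa [happ, dif_pos i.2] at this
        · obtain ⟨i, hi, hA⟩ := h3 j hj
          exact ⟨⟨i, hi⟩, by rwa [happ, dif_pos hi] at hA⟩
        · obtain ⟨j, hj, hA⟩ := h2 i.1 i.2
          exact ⟨j, hj, by rwa [happ, dif_neg i.2] at hA⟩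
      · rintro ⟨⟨h1, h3⟩, h2⟩
        refine ⟨fun i hi j hj => ?_, fun i hi => ?_, fun j hj => ?_⟩
        · rw [happ, dif_pos hi]; exact h1 ⟨i, hi⟩ j hj
        · obtain ⟨j, hj, hA⟩ := h2 ⟨i, hi⟩
          exact ⟨j, hj, by rw [happ, dif_neg hi]; exact hA⟩
        · obtain ⟨i, hA⟩ := h3 j hj
          exact ⟨i.1, i.2, by rw [happ, dif_pos i.2]; exact hA⟩
    have hw : (∏ i, ∏ j, w p ((e.symm (u, v)) i j))
        = (∏ i : {i : Fin m // i ∈ B}, ∏ j, w p (u i j))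
          * (∏ i : {i : Fin m // ¬ i ∈ B}, ∏ j, w p (v i j)) := by
      rw [← Fintype.prod_subtype_mul_prod_subtype (fun i : Fin m => i ∈ B)
        (fun i => ∏ j, w p ((e.symm (u, v)) i j))]
      congr 1
      · refine Finset.prod_congr (by ext x; simp) fun i _ => Finset.prod_congr rfl fun j _ => ?_
        rw [happ, dif_pos i.2]
      · refine Finset.prod_congr (by ext x; simp) fun i _ => Finset.prod_congr rfl fun j _ => ?_
        rw [happ, dif_neg i.2]
    rw [hw, if_congr hcond rfl rfl]
    by_cases hu : Cu u <;> by_cases hv : Cv v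
    · rw [if_pos (show Cu u ∧ Cv v from ⟨hu, hv⟩), if_pos hu, if_pos hv]
    · rw [if_neg (fun h => hv h.2), if_neg hv, mul_zero]
    · rw [if_neg (fun h => hu h.1), if_neg hu, zero_mul]
    · rw [if_neg (fun h => hu h.1), if_neg hu, zero_mul]
  -- reindex the sum
  rw [Finset.sum_filter]
  rw [← Equiv.sum_comp e.symm (fun A : Fin m → Fin n → Bool =>
    if ((∀ i ∈ B, ∀ j ∈ S, A i j = false) ∧ (∀ i ∉ B, ∃ j ∈ K, A i j = true) ∧
      (∀ j ∉ S, ∃ i ∈ B, A i j = true)) then ∏ i, ∏ j, w p (A i j) else 0)]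
  rw [Fintype.sum_prod_type]
  simp only [key]
  rw [← Finset.sum_mul_sum]
  -- block Cv
  have hv_block : (∑ v : {i : Fin m // ¬ i ∈ B} → Fin n → Bool,
      if Cv v then ∏ i : {i : Fin m // ¬ i ∈ B}, ∏ j, w p (v i j) else 0)
      = (1 - Q ^ K.card) ^ (m - B.card) := by
    rw [← Finset.sum_filter]
    rw [sum_pi_filter (fun (_ : {i : Fin m // ¬ i ∈ B}) (r : Fin n → Bool) => ∃ j ∈ K, r j = true)
      (fun r => ∏ j, w p (r j))]
    rw [Finset.prod_congr rfl (g := fun _ => 1 - Q ^ K.card) ?_]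
    rw [Finset.prod_const,
      Finset.card_univ, Fintype.card_subtype_compl, Fintype.card_fin, Fintype.card_coe]
    intro i _
    convert sum_exists_true hp0 hp1 K
  have hu_block : (∑ u : {i : Fin m // i ∈ B} → Fin n → Bool,
      if Cu u then ∏ i : {i : Fin m // i ∈ B}, ∏ j, w p (u i j) else 0)
      = Q ^ (B.card * S.card) * (1 - Q ^ B.card) ^ (n - S.card) := by
    rw [← Equiv.sum_comp (Equiv.piComm (fun (_ : Fin n) (_ : {i : Fin m // i ∈ B}) => Bool))
      (fun u => if Cu u then ∏ i : {i : Fin m // i ∈ B}, ∏ j, w p (u i j) else 0)]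
    set Pc : Fin n → ({i : Fin m // i ∈ B} → Bool) → Prop :=
      fun j col => (j ∈ S → ∀ i, col i = false) ∧ (j ∉ S → ∃ i, col i = true) with hPc
    have hpt : ∀ c : Fin n → {i : Fin m // i ∈ B} → Bool,
        (if Cu (Function.swap c) then
            ∏ i : {i : Fin m // i ∈ B}, ∏ j, w p (Function.swap c i j) else 0)
        = (if (∀ j, Pc j (c j)) then ∏ j, ∏ i : {i : Fin m // i ∈ B}, w p (c j i) else 0) := by
      intro c
      have hiff : Cu (Function.swap c) ↔ ∀ j, Pc j (c j) := by
        rw [hCu, hPc]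
        constructor
        · rintro ⟨h1, h2⟩ j
          exact ⟨fun hj i => h1 i j hj, fun hj => h2 j hj⟩
        · intro h
          exact ⟨fun i j hj => (h j).1 hj i, fun j hj => (h j).2 hj⟩
      rw [if_congr hiff rfl rfl, Finset.prod_comm]
    calc (∑ c : Fin n → {i : Fin m // i ∈ B} → Bool,
          if Cu ((Equiv.piComm fun _ _ => Bool) c) then
            ∏ i : {i : Fin m // i ∈ B}, ∏ j, w p (((Equiv.piComm fun _ _ => Bool) c) i j) else 0)
        = ∑ c ∈ Finset.univ.filter (fun c : Fin n → {i : Fin m // i ∈ B} → Bool => ∀ j, Pc j (c j)),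
            ∏ j, ∏ i : {i : Fin m // i ∈ B}, w p (c j i) := by
          rw [Finset.sum_filter]
          exact Finset.sum_congr rfl fun c _ => hpt c
      _ = ∏ j, ∑ col ∈ Finset.univ.filter (Pc j), ∏ i : {i : Fin m // i ∈ B}, w p (col i) := by
          refine (Finset.sum_congr ?_ fun _ _ => rfl).trans
            (sum_pi_filter Pc (fun col => ∏ i : {i : Fin m // i ∈ B}, w p (col i)))
          ext c; simp
      _ = ∏ j : Fin n, (if j ∈ S then Q ^ B.card else 1 - Q ^ B.card) := by
          refine Finset.prod_congr rfl fun j _ => ?_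
          by_cases hj : j ∈ S
          · rw [if_pos hj]
            have h := sum_forall_false hp0 hp1 (Finset.univ : Finset {i : Fin m // i ∈ B})
            rw [Finset.card_univ, Fintype.card_coe] at h
            rw [← h]
            refine Finset.sum_congr ?_ fun _ _ => rfl
            ext col; simp [hPc, hj]
          · rw [if_neg hj]
            have h := sum_exists_true hp0 hp1 (Finset.univ : Finset {i : Fin m // i ∈ B})
            rw [Finset.card_univ, Fintype.card_coe] at h
            rw [← h]
            refine Finset.sum_congr ?_ fun _ _ => rfl
            ext col; simp [hPc, hj]
      _ = Q ^ (B.card * S.card) * (1 - Q ^ B.card) ^ (n - S.card) := by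
          rw [Finset.prod_ite (fun _ => Q ^ B.card) (fun _ => 1 - Q ^ B.card),
            Finset.prod_const, Finset.prod_const, Finset.filter_univ_mem,
            Finset.filter_not, Finset.filter_univ_mem, Finset.card_univ_diff,
            Fintype.card_fin, ← pow_mul]
  rw [hu_block, hv_block]

def hiddenSet {n m : ℕ} (K : Finset (Fin n)) (A : Fin m → Fin n → Bool) : Finset (Fin n) :=
  ((Finset.univ \ K).filter
    (fun j => ∀ i, A i j = true → ∃ j' ∈ K, A i j' = true))

def negSet {n m : ℕ} (K : Finset (Fin n)) (A : Fin m → Fin n → Bool) : Finset (Fin m) :=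
  Finset.univ.filter (fun i => ∀ j ∈ K, A i j = false)

lemma classify {n m : ℕ} (K : Finset (Fin n)) (B : Finset (Fin m)) (H : Finset (Fin n))
    (hH : H ⊆ Finset.univ \ K) (A : Fin m → Fin n → Bool) :
    (negSet K A = B ∧ hiddenSet K A = H) ↔
      ((∀ i ∈ B, ∀ j ∈ K ∪ H, A i j = false) ∧
       (∀ i ∉ B, ∃ j ∈ K, A i j = true) ∧
       (∀ j ∉ K ∪ H, ∃ i ∈ B, A i j = true)) := by
  have hHK : ∀ j ∈ H, j ∉ K := fun j hj => (Finset.mem_sdiff.mp (hH hj)).2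
  constructor
  · rintro ⟨hB, hHs⟩
    subst hB hHs
    refine ⟨fun i hi j hj => ?_, fun i hi => ?_, fun j hj => ?_⟩
    · have hi' := (Finset.mem_filter.mp hi).2
      rcases Finset.mem_union.mp hj with hjK | hjH
      · exact hi' j hjK
      · have hjh := (Finset.mem_filter.mp hjH).2
        by_contra hne
        have htrue : A i j = true := by
          cases hAij : A i j
          · exact absurd hAij hne
          · rfl
        obtain ⟨j', hj', hj't⟩ := hjh i htrue
        rw [hi' j' hj'] at hj't
        exact Bool.false_ne_true hj't
    · have : ¬ ∀ j ∈ K, A i j = false := fun h => hi (Finset.mem_filter.mpr ⟨Finset.mem_univ _, h⟩)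
      push_neg at this
      obtain ⟨j, hj, hne⟩ := this
      refine ⟨j, hj, ?_⟩
      revert hne; cases A i j <;> simp
    · rw [Finset.mem_union] at hj
      push_neg at hj
      have hjn : j ∈ Finset.univ \ K := Finset.mem_sdiff.mpr ⟨Finset.mem_univ _, hj.1⟩
      have : ¬ ∀ i, A i j = true → ∃ j' ∈ K, A i j' = true := by
        intro h
        exact hj.2 (Finset.mem_filter.mpr ⟨hjn, h⟩)
      push_neg at this
      obtain ⟨i, hit, hno⟩ := this
      refine ⟨i, Finset.mem_filter.mpr ⟨Finset.mem_univ _, fun j' hj' => ?_⟩, hit⟩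
      cases hAij : A i j'
      · rfl
      · exact absurd hAij (hno j' hj')
  · rintro ⟨c1, c2, c3⟩
    constructor
    · ext i
      simp only [negSet, Finset.mem_filter, Finset.mem_univ, true_and]
      constructor
      · intro h
        by_contra hiB
        obtain ⟨j, hj, ht⟩ := c2 i hiB
        rw [h j hj] at ht
        exact Bool.false_ne_true ht
      · intro hiB j hj
        exact c1 i hiB j (Finset.mem_union_left _ hj)
    · ext j
      simp only [hiddenSet, Finset.mem_filter, Finset.mem_sdiff, Finset.mem_univ, true_and]
      constructor
      · rintro ⟨hjK, hhid⟩
        by_contra hjH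
        obtain ⟨i, hiB, hit⟩ := c3 j
          (fun hmem => (Finset.mem_union.mp hmem).elim hjK hjH)
        obtain ⟨j', hj', hj't⟩ := hhid i hit
        rw [c1 i hiB j' (Finset.mem_union_left _ hj')] at hj't
        exact Bool.false_ne_true hj't
      · intro hjH
        refine ⟨hHK j hjH, fun i hit => ?_⟩
        by_cases hiB : i ∈ B
        · rw [c1 i hiB j (Finset.mem_union_right _ hjH)] at hit
          exact absurd hit Bool.false_ne_true
        · exact c2 i hiB


lemma main_sum {p : ℝ} (hp0 : 0 ≤ p) (hp1 : p ≤ 1) {n m k g : ℕ}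
    (K : Finset (Fin n)) (hK : K.card = k) :
    ∑ A ∈ Finset.univ.filter (fun A : Fin m → Fin n → Bool => hiddenCount K A = g),
      ∏ i, ∏ j, w p (A i j)
    = (Nat.choose (n - k) g : ℝ≥0∞) * ∑ b ∈ Finset.range (m + 1),
        (Nat.choose m b : ℝ≥0∞) * (ENNReal.ofReal (1 - p)) ^ (b * (g + k))
          * (1 - (ENNReal.ofReal (1 - p)) ^ b) ^ (n - k - g)
          * (1 - (ENNReal.ofReal (1 - p)) ^ k) ^ (m - b) := by
  classical
  set Q := ENNReal.ofReal (1 - p) with hQdef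
  set t := (Finset.univ : Finset (Fin m)).powerset ×ˢ (Finset.univ \ K).powersetCard g with ht
  have hmaps : ∀ A ∈ Finset.univ.filter (fun A : Fin m → Fin n → Bool => hiddenCount K A = g),
      (negSet K A, hiddenSet K A) ∈ t := by
    intro A hA
    rw [Finset.mem_filter] at hA
    rw [ht, Finset.mem_product]
    exact ⟨Finset.mem_powerset.mpr (Finset.subset_univ _),
      Finset.mem_powersetCard.mpr ⟨Finset.filter_subset _ _, hA.2⟩⟩
  rw [← Finset.sum_fiberwise_of_maps_to hmaps (fun A => ∏ i, ∏ j, w p (A i j))]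
  have hval : ∀ y ∈ t,
      (∑ A ∈ (Finset.univ.filter
          (fun A : Fin m → Fin n → Bool => hiddenCount K A = g)).filter
          (fun A => (negSet K A, hiddenSet K A) = y),
        ∏ i, ∏ j, w p (A i j))
      = Q ^ (y.1.card * (g + k)) * (1 - Q ^ y.1.card) ^ (n - k - g)
          * (1 - Q ^ k) ^ (m - y.1.card) := by
    rintro ⟨B, H⟩ hy
    rw [ht, Finset.mem_product, Finset.mem_powerset, Finset.mem_powersetCard] at hy
    have hHsub : H ⊆ Finset.univ \ K := hy.2.1
    have hHcard : H.card = g := hy.2.2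
    have hdisj : Disjoint K H := Finset.disjoint_left.mpr
      (fun a haK haH => (Finset.mem_sdiff.mp (hHsub haH)).2 haK)
    have hcardU : (K ∪ H).card = g + k := by
      rw [Finset.card_union_of_disjoint hdisj, hK, hHcard, Nat.add_comm]
    have hfe : (Finset.univ.filter
          (fun A : Fin m → Fin n → Bool => hiddenCount K A = g)).filter
          (fun A => (negSet K A, hiddenSet K A) = (B, H))
        = Finset.univ.filter (fun A : Fin m → Fin n → Bool =>
            (∀ i ∈ B, ∀ j ∈ K ∪ H, A i j = false) ∧
            (∀ i ∉ B, ∃ j ∈ K, A i j = true) ∧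
            (∀ j ∉ K ∪ H, ∃ i ∈ B, A i j = true)) := by
      rw [Finset.filter_filter]
      apply Finset.filter_congr
      intro A _
      rw [Prod.mk.injEq]
      constructor
      · rintro ⟨-, h⟩
        exact (classify K B H hHsub A).mp h
      · intro h
        have h2 := (classify K B H hHsub A).mpr h
        refine ⟨?_, h2⟩
        show (hiddenSet K A).card = g
        rw [h2.2, hHcard]
      done
    have h2 : n - (K ∪ H).card = n - k - g := by omega
    rw [hfe, fiber_sum hp0 hp1 K B H, h2, hcardU, ← hQdef, hK]
  rw [Finset.sum_congr rfl hval, Finset.sum_product]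
  have hcardNK : (Finset.univ \ K).card = n - k := by
    rw [Finset.card_univ_diff, Fintype.card_fin, hK]
  have hinner : ∀ B : Finset (Fin m),
      (∑ H ∈ (Finset.univ \ K).powersetCard g,
        Q ^ (B.card * (g + k)) * (1 - Q ^ B.card) ^ (n - k - g) * (1 - Q ^ k) ^ (m - B.card))
      = (Nat.choose (n - k) g : ℝ≥0∞) *
          (Q ^ (B.card * (g + k)) * (1 - Q ^ B.card) ^ (n - k - g)
            * (1 - Q ^ k) ^ (m - B.card)) := by
    intro B
    rw [Finset.sum_const, Finset.card_powersetCard, hcardNK, nsmul_eq_mul]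
  rw [Finset.sum_congr rfl (fun B _ => hinner B), Finset.sum_powerset]
  rw [Finset.card_univ, Fintype.card_fin]
  rw [Finset.mul_sum]
  refine Finset.sum_congr rfl fun b hb => ?_
  have hbc : ∀ B ∈ Finset.powersetCard b (Finset.univ : Finset (Fin m)), B.card = b :=
    fun B hB => (Finset.mem_powersetCard.mp hB).2
  rw [Finset.sum_congr rfl (fun B hB => by rw [hbc B hB]), Finset.sum_const,
    Finset.card_powersetCard, Finset.card_univ, Fintype.card_fin, nsmul_eq_mul]
  ring

/-- The exact distribution of the number of hidden non-defectives:
`P(G = g) = C(n-k,g) ∑_{b=0}^m C(m,b) (1-p)^{b(g+k)} (1-(1-p)^b)^{n-k-g} (1-(1-p)^k)^{m-b}`. -/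
theorem stmt17 (n m k g : ℕ) (p : ℝ) (hp : p ∈ Set.Ioo (0 : ℝ) 1)
    (K : Finset (Fin n)) (hK : K.card = k) (hk1 : 1 ≤ k) (hkn : k < n)
    (hg : g ≤ n - k) :
    (Measure.pi fun _ : Fin m => Measure.pi fun _ : Fin n => bern p)
      {A | hiddenCount K A = g}
      = ENNReal.ofReal ((Nat.choose (n - k) g : ℝ) *
          ∑ b ∈ Finset.range (m + 1),
            (Nat.choose m b : ℝ) * (1 - p) ^ (b * (g + k)) *
              (1 - (1 - p) ^ b) ^ (n - k - g) * (1 - (1 - p) ^ k) ^ (m - b)) := by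
  classical
  have hp0 : (0:ℝ) ≤ p := hp.1.le
  have hp1 : p ≤ 1 := hp.2.le
  have hq0 : (0:ℝ) ≤ 1 - p := by linarith
  have hq1 : (1:ℝ) - p ≤ 1 := by linarith
  have h1 : ∀ e : ℕ, (0:ℝ) ≤ 1 - (1 - p) ^ e := fun e => by
    have := pow_le_one₀ hq0 hq1 (n := e); linarith
  have hterm : ∀ b : ℕ, (0:ℝ) ≤ (Nat.choose m b : ℝ) * (1 - p) ^ (b * (g + k)) *
      (1 - (1 - p) ^ b) ^ (n - k - g) * (1 - (1 - p) ^ k) ^ (m - b) :=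
    fun b => mul_nonneg (mul_nonneg (mul_nonneg (Nat.cast_nonneg _)
      (pow_nonneg hq0 _)) (pow_nonneg (h1 b) _)) (pow_nonneg (h1 k) _)
  have hofQ : ∀ e : ℕ, ENNReal.ofReal (1 - (1 - p) ^ e)
      = 1 - (ENNReal.ofReal (1 - p)) ^ e := fun e => by
    rw [ENNReal.ofReal_sub _ (pow_nonneg hq0 e), ENNReal.ofReal_one, ENNReal.ofReal_pow hq0]
  rw [meas_eq_sum (Measure.pi fun _ : Fin m => Measure.pi fun _ : Fin n => bern p)
    {A | hiddenCount K A = g}]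
  have hfs : (Finset.univ.filter (· ∈ {A : Fin m → Fin n → Bool | hiddenCount K A = g}))
      = Finset.univ.filter (fun A => hiddenCount K A = g) := by
    ext A; simp
  rw [hfs, Finset.sum_congr rfl (fun A _ => pi_singleton p A), main_sum hp0 hp1 K hK]
  rw [ENNReal.ofReal_mul (Nat.cast_nonneg _), ENNReal.ofReal_natCast,
    ENNReal.ofReal_sum_of_nonneg (fun b _ => hterm b)]
  congr 1
  refine Finset.sum_congr rfl fun b _ => ?_
  rw [ENNReal.ofReal_mul (mul_nonneg (mul_nonneg (Nat.cast_nonneg _) (pow_nonneg hq0 _))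
      (pow_nonneg (h1 b) _)),
    ENNReal.ofReal_mul (mul_nonneg (Nat.cast_nonneg _) (pow_nonneg hq0 _)),
    ENNReal.ofReal_mul (Nat.cast_nonneg _), ENNReal.ofReal_natCast,
    ENNReal.ofReal_pow hq0, ENNReal.ofReal_pow (h1 b), ENNReal.ofReal_pow (h1 k),
    hofQ b, hofQ k]
end
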